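/- Suppose the function a (least accumulation point) satisfies: whenever defined, a(α,η,γ) > γ and a(α,η,γ) is an accumulation point for (α,η). Given an ordinal c and starting point α_0 < c, define recursively α_{i+1} = a(α,η,α_i) as long as it is defined and ≤ c. If (i) every α_i is defined and α_i < c would imply α_{i+1} defined, (ii) the limit α' = sup_i α_i, if all α_i < c, lies in some C(α,τ) with τ ≥ η, and (iii) α_0 was chosen above sup(⋃_{λ≥η}C(α,λ) ∩ c), then either some α_i = c (so c = a(α,η,α_{i-1}) witnesses c as an accumulation point reached in finitely many steps from below) or α' = c and c ∈ C(α,τ) for some τ ≥ η. In particular there is γ < c with c = a(α,η,γ) or c ∈ ⋃_{τ≥η} C(α,τ) as a limit. -/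
import Mathlib


open Ordinal

theorem accumulation_recursion_reaches_c
    (C : Ordinal → Ordinal → Set Ordinal)
    (hsub : ∀ α β, C α β ⊆ Set.Iio α)
    (a : Ordinal → Ordinal → Ordinal → Option Ordinal)
    (hgt : ∀ α η γ w, a α η γ = some w → γ < w)
    (α η c ν : Ordinal)
    -- `ν = sup(⋃_{λ ≥ η} C(α,λ) ∩ c) < c`
    (hν : ν < c) (hνbd : ∀ x, (∃ lam ≥ η, x ∈ C α lam) → x < c → x ≤ ν)
    (A : ℕ → Ordinal)
    (hA0 : ν < A 0 ∧ A 0 < c)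
    (hAle : ∀ i, A i ≤ c)
    -- (i) the recursion continues as long as `A i < c`
    (hrec : ∀ i, A i < c → a α η (A i) = some (A (i + 1)))
    -- (ii) if all `A i < c` then the limit lies in some `C(α,τ)` with `τ ≥ η`
    (hlim : (∀ i, A i < c) → ∃ τ ≥ η, (⨆ i, A i) ∈ C α τ) :
    ((∃ i, A i = c) ∨ ((⨆ i, A i) = c ∧ ∃ τ ≥ η, c ∈ C α τ)) ∧
      ((∃ γ < c, a α η γ = some c) ∨ (∃ τ ≥ η, c ∈ C α τ)) := by
  by_cases h : ∃ i, A i = c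
  · refine ⟨Or.inl h, Or.inl ?_⟩
    have hne := h
    classical
    let i := Nat.find hne
    have hi : A i = c := Nat.find_spec hne
    have hipos : i ≠ 0 := by
      intro h0
      have := hA0.2
      rw [h0] at hi
      exact absurd hi this.ne
    obtain ⟨j, hj⟩ := Nat.exists_eq_succ_of_ne_zero hipos
    have hjlt : A j < c := by
      have hne' : A j ≠ c := Nat.find_min hne (by omega)
      exact lt_of_le_of_ne (hAle j) hne'
    refine ⟨A j, hjlt, ?_⟩
    have h2 := hrec j hjlt
    have : A (j+1) = c := by rw [← Nat.succ_eq_add_one, ← hj]; exact hi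
    rw [this] at h2
    exact h2
  · push_neg at h
    have hall : ∀ i, A i < c := fun i => lt_of_le_of_ne (hAle i) (h i)
    obtain ⟨τ, hτ, hmem⟩ := hlim hall
    have hsle : (⨆ i, A i) ≤ c := Ordinal.iSup_le hAle
    have hseq : (⨆ i, A i) = c := by
      rcases lt_or_eq_of_le hsle with hlt | heq
      · exfalso
        have hle : (⨆ i, A i) ≤ ν := hνbd _ ⟨τ, hτ, hmem⟩ hlt
        have : A 0 ≤ ⨆ i, A i := Ordinal.le_iSup A 0
        exact absurd (this.trans hle) (not_le.mpr hA0.1)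
      · exact heq
    rw [hseq] at hmem
    exact ⟨Or.inr ⟨hseq, τ, hτ, hmem⟩, Or.inr ⟨τ, hτ, hmem⟩⟩
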